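/- arXiv:2005.07866 — 7 statements merged into one kernel-verified Lean document; each statement's English description precedes it below -/
import Mathlib

section
/- Let (Ω, P) be a probability space, let d, R be positive integers, let ε, ε' > 0 with ε + ε' < 1, and let σ, b, κ > 0. Suppose μ_1, …, μ_R ∈ ℝ^d satisfy the gradient-dissimilarity bound ‖μ_r − (1/R)∑_{j=1}^R μ_j‖ ≤ κ for every r ∈ {1,…,R}. Let H ⊆ {1,…,R} with |H| ≥ (1−ε)R, and let (g_r)_{r∈H} be independent, square-integrable random vectors in ℝ^d with E[g_r] = μ_r and E[‖g_r − μ_r‖²] ≤ σ²/b for every r ∈ H. Then with probability at least 1 − exp(−ε'²(1−ε)R/16) there exists a subset S ⊆ H with |S| ≥ (1−(ε+ε'))R such that for every unit vector v ∈ ℝ^d, (1/|S|) ∑_{i∈S} ⟨g_i − g_S, v⟩² ≤ (24σ²/(bε'))·(1 + d/((1−(ε+ε'))R)) + 16κ², where g_S = (1/|S|) ∑_{i∈S} g_i is the sample mean of the selected gradients. -/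
open MeasureTheory ProbabilityTheory
open scoped RealInnerProductSpace BigOperators ENNReal

open Finset Real

/-!
Call an honest worker far if `‖g r - μ r‖ > τ`, where `τ ^ 2 = 4 σ ^ 2 / (b ε')`. By Chebyshev's
inequality each worker is far with probability at most `ε' / 4`, so by the Chernoff bound for
independent Bernoulli variables fewer than `ε' R` workers are far, except with probability
`exp (-ε' ^ 2 (1 - ε) R / 16)`. Discarding the far workers leaves a set `S` of at least
`(1 - ε - ε') R` workers, each within `τ + κ` of the global mean gradient. Since the sample mean
minimizes the sum of squared distances, every directional variance of `S` is at most
`(τ + κ) ^ 2 ≤ 2 τ ^ 2 + 2 κ ^ 2`.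
-/

section DirectionalVariance

variable {ι E : Type*} [NormedAddCommGroup E] [InnerProductSpace ℝ E]

noncomputable def directionalVariance (S : Finset ι) (x : ι → E) (v : E) : ℝ :=
  (#S : ℝ)⁻¹ * ∑ i ∈ S, ⟪x i - (#S : ℝ)⁻¹ • ∑ j ∈ S, x j, v⟫ ^ 2

theorem sum_norm_sub_mean_sq_le (S : Finset ι) (x : ι → E) (c : E) :
    ∑ i ∈ S, ‖x i - (#S : ℝ)⁻¹ • ∑ j ∈ S, x j‖ ^ 2 ≤ ∑ i ∈ S, ‖x i - c‖ ^ 2 := by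
  rcases S.eq_empty_or_nonempty with rfl | hS
  · simp
  set m := (#S : ℝ)⁻¹ • ∑ j ∈ S, x j
  have hcentred : ∑ i ∈ S, (x i - m) = 0 := by
    have hcard : (#S : ℝ) ≠ 0 := by exact_mod_cast hS.card_pos.ne'
    rw [sum_sub_distrib, sum_const, ← Nat.cast_smul_eq_nsmul ℝ, smul_smul,
      mul_inv_cancel₀ hcard, one_smul, sub_self]
  have hsplit : ∑ i ∈ S, ‖x i - c‖ ^ 2 = ∑ i ∈ S, ‖x i - m‖ ^ 2 + #S * ‖m - c‖ ^ 2 := by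
    have hpyth : ∀ i, ‖x i - c‖ ^ 2 = ‖x i - m‖ ^ 2 + 2 * ⟪x i - m, m - c⟫ + ‖m - c‖ ^ 2 :=
      fun i => by rw [← norm_add_sq_real, sub_add_sub_cancel]
    simp only [hpyth, sum_add_distrib, ← mul_sum, ← sum_inner, hcentred, inner_zero_left,
      mul_zero, add_zero, sum_const, nsmul_eq_mul]
  rw [hsplit]
  exact le_add_of_nonneg_right (by positivity)

theorem directionalVariance_le_sq {S : Finset ι} {x : ι → E} {c : E} {ρ : ℝ}
    (hx : ∀ i ∈ S, ‖x i - c‖ ≤ ρ) {v : E} (hv : ‖v‖ ≤ 1) :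
    directionalVariance S x v ≤ ρ ^ 2 := by
  rcases S.eq_empty_or_nonempty with rfl | hS
  · simpa [directionalVariance] using sq_nonneg ρ
  have hinner : ∀ y : E, ⟪y, v⟫ ^ 2 ≤ ‖y‖ ^ 2 := fun y =>
    sq_le_sq.2 <| by
      rw [abs_norm]
      exact (abs_real_inner_le_norm y v).trans (mul_le_of_le_one_right (norm_nonneg y) hv)
  rw [directionalVariance, inv_mul_le_iff₀ (by exact_mod_cast hS.card_pos)]
  calc ∑ i ∈ S, ⟪x i - (#S : ℝ)⁻¹ • ∑ j ∈ S, x j, v⟫ ^ 2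
      ≤ ∑ i ∈ S, ‖x i - (#S : ℝ)⁻¹ • ∑ j ∈ S, x j‖ ^ 2 := sum_le_sum fun i _ => hinner _
    _ ≤ ∑ i ∈ S, ‖x i - c‖ ^ 2 := sum_norm_sub_mean_sq_le S x c
    _ ≤ ∑ _i ∈ S, ρ ^ 2 := sum_le_sum fun i hi => pow_le_pow_left₀ (norm_nonneg _) (hx i hi) 2
    _ = #S * ρ ^ 2 := by rw [sum_const, nsmul_eq_mul]

theorem exists_subset_directionalVariance_le (H : Finset ι) (x μ : ι → E) {c : E} {τ κ : ℝ}
    (hμ : ∀ i ∈ H, ‖μ i - c‖ ≤ κ) :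
    ∃ S ⊆ H, #S + #{i ∈ H | τ < ‖x i - μ i‖} = #H ∧
      ∀ v : E, ‖v‖ ≤ 1 → directionalVariance S x v ≤ (τ + κ) ^ 2 := by
  refine ⟨{i ∈ H | ¬τ < ‖x i - μ i‖}, filter_subset _ _,
    by rw [add_comm]; exact card_filter_add_card_filter_not _,
    fun v hv => directionalVariance_le_sq (c := c) (fun i hi => ?_) hv⟩
  obtain ⟨hiH, hnear⟩ := mem_filter.1 hi
  exact (norm_sub_le_norm_sub_add_norm_sub _ (μ i) _).trans
    (add_le_add (not_lt.1 hnear) (hμ i hiH))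

end DirectionalVariance

section TailBounds

variable {Ω : Type*} [MeasurableSpace Ω] {P : Measure Ω} [IsProbabilityMeasure P]

theorem integrable_of_zero_or_one {X : Ω → ℝ} (hX : AEMeasurable X P)
    (h01 : ∀ ω, X ω = 0 ∨ X ω = 1) : Integrable X P :=
  .of_bound hX.aestronglyMeasurable 1 <| ae_of_all _ fun ω => by rcases h01 ω with h | h <;> simp [h]

theorem mgf_le_exp_of_zero_or_one {X : Ω → ℝ} (hX : AEMeasurable X P)
    (h01 : ∀ ω, X ω = 0 ∨ X ω = 1) (t : ℝ) :
    mgf X P t ≤ exp ((exp t - 1) * P[X]) := by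
  have hlin : (fun ω => exp (t * X ω)) = fun ω => 1 + (exp t - 1) * X ω := by
    funext ω
    rcases h01 ω with h | h <;> simp [h]
  rw [mgf, hlin, integral_add (integrable_const 1)
    ((integrable_of_zero_or_one hX h01).const_mul _), integral_const_mul]
  simpa [add_comm] using add_one_le_exp ((exp t - 1) * P[X])

theorem measureReal_le_sum_le_of_zero_or_one {ι : Type*} [Fintype ι] {X : ι → Ω → ℝ}
    (hindep : iIndepFun X P) (hX : ∀ i, AEMeasurable (X i) P)
    (h01 : ∀ i ω, X i ω = 0 ∨ X i ω = 1) (a : ℝ) {t : ℝ} (ht : 0 ≤ t) :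
    P.real {ω | a ≤ ∑ i, X i ω} ≤ exp (-t * a + (exp t - 1) * ∑ i, P[X i]) := by
  have hle_one : ∀ i ω, X i ω ≤ 1 := fun i ω => by rcases h01 i ω with h | h <;> simp [h]
  have hint : Integrable (fun ω => exp (t * ∑ i, X i ω)) P := by
    refine .of_bound ?_ (exp (t * Fintype.card ι)) (ae_of_all _ fun ω => ?_)
    · exact ((Finset.aemeasurable_fun_sum _ fun i _ => hX i).const_mul t).exp.aestronglyMeasurable
    · rw [norm_of_nonneg (exp_pos _).le, exp_le_exp]
      gcongr
      simpa using sum_le_sum fun i (_ : i ∈ univ) => hle_one i ω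
  calc P.real {ω | a ≤ ∑ i, X i ω}
      ≤ exp (-t * a) * mgf (fun ω => ∑ i, X i ω) P t := measure_ge_le_exp_mul_mgf a ht hint
    _ = exp (-t * a) * ∏ i, mgf (X i) P t := by rw [← Finset.sum_fn, hindep.mgf_sum₀ hX]
    _ ≤ exp (-t * a) * ∏ i, exp ((exp t - 1) * P[X i]) := by
        gcongr with i
        exacts [fun i _ => mgf_nonneg, mgf_le_exp_of_zero_or_one (hX i) (h01 i) t]
    _ = exp (-t * a + (exp t - 1) * ∑ i, P[X i]) := by rw [← exp_sum, ← exp_add, mul_sum]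

theorem integral_ite_lt_le_integral_sq_div {f : Ω → ℝ} (hf : MemLp f 2 P) {τ : ℝ} (hτ : 0 < τ) :
    ∫ ω, (if τ < f ω then (1 : ℝ) else 0) ∂P ≤ (∫ ω, f ω ^ 2 ∂P) / τ ^ 2 := by
  have hmeas : Measurable fun y : ℝ => if τ < y then (1 : ℝ) else 0 :=
    Measurable.ite measurableSet_Ioi measurable_const measurable_const
  rw [← integral_div]
  refine integral_mono (integrable_of_zero_or_one (hmeas.comp_aemeasurable hf.1.aemeasurable)
    fun ω => ?_) (hf.integrable_sq.div_const _) fun ω => ?_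
  · split_ifs <;> simp
  · split_ifs with h
    · rw [one_le_div (by positivity)]
      exact pow_le_pow_left₀ hτ.le h.le 2
    · positivity

/-- Chebyshev's inequality for each variable, then the Chernoff bound at `t = log 2` for the
number of variables that are far from their centres. -/
theorem measureReal_le_card_far_le {ι E : Type*} [NormedAddCommGroup E] [MeasurableSpace E]
    [OpensMeasurableSpace E] {H : Finset ι} {Y : ι → Ω → E}
    (hindep : iIndepFun (fun r : H => Y r) P) (hY : ∀ r ∈ H, MemLp (Y r) 2 P) {c : ι → E}
    {s : ℝ} (hvar : ∀ r ∈ H, ∫ ω, ‖Y r ω - c r‖ ^ 2 ∂P ≤ s) {τ : ℝ} (hτ : 0 < τ) (a : ℝ) :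
    P.real {ω | a ≤ #{r ∈ H | τ < ‖Y r ω - c r‖}} ≤ exp (-log 2 * a + #H * (s / τ ^ 2)) := by
  set X : H → Ω → ℝ := fun r ω => if τ < ‖Y r ω - c r‖ then 1 else 0
  have hdev : ∀ r : H, MemLp (fun ω => ‖Y r ω - c r‖) 2 P := fun r =>
    ((hY r r.2).sub (memLp_const (c r))).norm
  have h01 : ∀ r ω, X r ω = 0 ∨ X r ω = 1 := fun r ω => by
    simp only [X]; split_ifs <;> simp
  have hXmeas : ∀ r, AEMeasurable (X r) P := fun r =>
    (Measurable.ite measurableSet_Ioi measurable_const measurable_const).comp_aemeasurable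
      (hdev r).1.aemeasurable
  have hindepX : iIndepFun X P :=
    hindep.comp (fun r y => if τ < ‖y - c r‖ then (1 : ℝ) else 0) fun r =>
      Measurable.ite (measurableSet_lt measurable_const
        (continuous_norm.comp (continuous_sub_right (c r))).measurable) measurable_const
        measurable_const
  have hEX : ∀ r : H, P[X r] ≤ s / τ ^ 2 := fun r =>
    (integral_ite_lt_le_integral_sq_div (hdev r) hτ).trans
      (by gcongr; exact hvar r r.2)
  have hcount : ∀ ω, (#{r ∈ H | τ < ‖Y r ω - c r‖} : ℝ) = ∑ r, X r ω := fun ω => by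
    rw [sum_coe_sort H (fun r => if τ < ‖Y r ω - c r‖ then (1 : ℝ) else 0), sum_boole]
  calc P.real {ω | a ≤ #{r ∈ H | τ < ‖Y r ω - c r‖}}
      = P.real {ω | a ≤ ∑ r, X r ω} := by simp_rw [hcount]
    _ ≤ exp (-log 2 * a + (exp (log 2) - 1) * ∑ r, P[X r]) :=
        measureReal_le_sum_le_of_zero_or_one hindepX hXmeas h01 a (log_nonneg one_le_two)
    _ ≤ exp (-log 2 * a + #H * (s / τ ^ 2)) := by
        rw [exp_log two_pos, exp_le_exp]
        have := sum_le_sum fun r (_ : r ∈ univ) => hEX r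
        rw [sum_const, card_univ, Fintype.card_coe, nsmul_eq_mul] at this
        linarith

theorem ofReal_one_sub_le_measure {s t : Set Ω} {p : ℝ} (hs : P.real s ≤ p) (hst : sᶜ ⊆ t) :
    ENNReal.ofReal (1 - p) ≤ P t :=
  calc ENNReal.ofReal (1 - p)
      ≤ ENNReal.ofReal (1 - P.real s) := by gcongr
    _ = P Set.univ - P s := by
        rw [ENNReal.ofReal_sub _ measureReal_nonneg, ENNReal.ofReal_one, ofReal_measureReal,
          measure_univ]
    _ ≤ P (Set.univ \ s) := le_measure_sdiff
    _ ≤ P t := measure_mono fun ω hω => hst hω.2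

end TailBounds

theorem stmt_0_general
    (Ω : Type*) [MeasurableSpace Ω] (P : Measure Ω) [IsProbabilityMeasure P]
    (d R : ℕ)
    (ε ε' : ℝ) (hε : 0 < ε) (hε' : 0 < ε') (hεsum : ε + ε' < 1)
    (σ b κ : ℝ) (hσ : 0 < σ) (hb : 0 < b)
    (μ : Fin R → EuclideanSpace ℝ (Fin d))
    (hdissim : ∀ r, ‖μ r - (R : ℝ)⁻¹ • ∑ j, μ j‖ ≤ κ)
    (H : Finset (Fin R)) (hH : (1 - ε) * R ≤ H.card)
    (g : Fin R → Ω → EuclideanSpace ℝ (Fin d))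
    (hindep : iIndepFun (fun r : H => g r.1) P)
    (hL2 : ∀ r ∈ H, MemLp (g r) 2 P)
    (hvar : ∀ r ∈ H, ∫ ω, ‖g r ω - μ r‖ ^ 2 ∂P ≤ σ ^ 2 / b) :
    ENNReal.ofReal (1 - Real.exp (-(ε' ^ 2 * (1 - ε) * R) / 16)) ≤
      P {ω | ∃ S : Finset (Fin R), S ⊆ H ∧ (1 - (ε + ε')) * R ≤ S.card ∧
        ∀ v : EuclideanSpace ℝ (Fin d), ‖v‖ = 1 →
          (S.card : ℝ)⁻¹ * ∑ i ∈ S, ⟪g i ω - (S.card : ℝ)⁻¹ • ∑ j ∈ S, g j ω, v⟫ ^ 2 ≤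
            24 * σ ^ 2 / (b * ε') * (1 + d / ((1 - (ε + ε')) * R)) + 16 * κ ^ 2} := by
  -- The threshold at which Chebyshev gives each worker probability `ε' / 4` of being far.
  set τ := √(4 * σ ^ 2 / (b * ε'))
  have hτsq : τ ^ 2 = 4 * σ ^ 2 / (b * ε') := sq_sqrt (by positivity)
  have hs : 0 < 1 - (ε + ε') := by linarith
  refine ofReal_one_sub_le_measure
    ((measureReal_le_card_far_le hindep hL2 hvar (by positivity : 0 < τ) (ε' * R)).trans ?_)
    fun ω (hω : ¬ε' * R ≤ _) => ?_
  · have hεε : ε' * R * (ε' * (1 - ε)) ≤ ε' * R :=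
      mul_le_of_le_one_right (by positivity) (by nlinarith)
    have hlog : 0.69 * (ε' * R) ≤ log 2 * (ε' * R) := by
      gcongr
      linarith [log_two_gt_d9]
    have hHR : (#H : ℝ) ≤ R := by exact_mod_cast (card_le_univ H).trans_eq (Fintype.card_fin R)
    have hfrac : σ ^ 2 / b / τ ^ 2 = ε' / 4 := by rw [hτsq]; field_simp
    rw [exp_le_exp, hfrac]
    nlinarith [show 0 ≤ ε' * R by positivity]
  obtain ⟨S, hSH, hcard, hS⟩ :=
    exists_subset_directionalVariance_le (τ := τ) H (fun r => g r ω) μ fun r _ => hdissim r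
  refine ⟨S, hSH, ?_, fun v hv => (hS v hv.le).trans ?_⟩
  · rw [← hcard] at hH
    push_cast at hH
    linarith
  calc (τ + κ) ^ 2 ≤ 2 * τ ^ 2 + 2 * κ ^ 2 := by nlinarith [sq_nonneg (τ - κ)]
    _ = 8 * σ ^ 2 / (b * ε') + 2 * κ ^ 2 := by rw [hτsq]; ring
    _ ≤ 24 * σ ^ 2 / (b * ε') + 24 * σ ^ 2 / (b * ε') * (d / ((1 - (ε + ε')) * R)) +
        16 * κ ^ 2 := by
      gcongr
      · exact le_add_of_le_of_nonneg (by gcongr; norm_num) (by positivity)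
      · norm_num
    _ = _ := by rw [mul_one_add]

/-- **Matrix concentration for heterogeneous stochastic gradients**
(first part of the robust gradient estimation theorem). -/
theorem stmt_0
    (Ω : Type*) [MeasurableSpace Ω] (P : Measure Ω) [IsProbabilityMeasure P]
    (d R : ℕ) (hd : 0 < d) (hR : 0 < R)
    (ε ε' : ℝ) (hε : 0 < ε) (hε' : 0 < ε') (hεsum : ε + ε' < 1)
    (σ b κ : ℝ) (hσ : 0 < σ) (hb : 0 < b) (hκ : 0 < κ)
    (μ : Fin R → EuclideanSpace ℝ (Fin d))
    (hdissim : ∀ r, ‖μ r - (R : ℝ)⁻¹ • ∑ j, μ j‖ ≤ κ)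
    (H : Finset (Fin R)) (hH : (1 - ε) * R ≤ H.card)
    (g : Fin R → Ω → EuclideanSpace ℝ (Fin d))
    (hindep : iIndepFun (fun r : H => g r.1) P)
    (hL2 : ∀ r ∈ H, MemLp (g r) 2 P)
    (hmean : ∀ r ∈ H, ∫ ω, g r ω ∂P = μ r)
    (hvar : ∀ r ∈ H, ∫ ω, ‖g r ω - μ r‖ ^ 2 ∂P ≤ σ ^ 2 / b) :
    ENNReal.ofReal (1 - Real.exp (-(ε' ^ 2 * (1 - ε) * R) / 16)) ≤
      P {ω | ∃ S : Finset (Fin R), S ⊆ H ∧ (1 - (ε + ε')) * R ≤ S.card ∧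
        ∀ v : EuclideanSpace ℝ (Fin d), ‖v‖ = 1 →
          (S.card : ℝ)⁻¹ * ∑ i ∈ S, ⟪g i ω - (S.card : ℝ)⁻¹ • ∑ j ∈ S, g j ω, v⟫ ^ 2 ≤
            24 * σ ^ 2 / (b * ε') * (1 + d / ((1 - (ε + ε')) * R)) + 16 * κ ^ 2} :=
  stmt_0_general Ω P d R ε ε' hε hε' hεsum σ b κ hσ hb μ hdissim H hH g hindep hL2 hvar
end

section
/- Let d be a positive integer and let F : ℝ^d → ℝ be differentiable, L-smooth, and μ-strongly convex with 0 < μ ≤ L, and let x* ∈ ℝ^d be a minimizer of F (so ∇F(x*) = 0). Let e ≥ 0 and let (x^t)_{t≥0}, (g^t)_{t≥0} be sequences in ℝ^d satisfying x^{t+1} = x^t − (μ/L²)·g^t and ‖g^t − ∇F(x^t)‖² ≤ e² for every t ≥ 0. Then for every T ≥ 0, ‖x^T − x*‖² ≤ (1 − μ²/(2L²))^T · ‖x^0 − x*‖² + (6L²/μ⁴)·e². -/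
/-!
Strong convexity makes the gradient field strongly monotone, so, since `∇F(x*) = 0`, an exact
gradient step of size `μ / L²` contracts `‖x - x*‖²` by the factor `1 - μ²/L²`. Splitting the
error of the inexact step off with Young's inequality `(a + b)² ≤ (1 + ε) a² + (1 + ε⁻¹) b²`
at `ε = μ²/(2L²)` leaves the contraction factor `1 - μ²/(2L²)` and an additive error `3e²/L²`;
unrolling this affine recursion gives the bound, the geometric series of errors summing to
`(2L²/μ²) · 3e²/L² = 6e²/μ² ≤ 6L²e²/μ⁴`.
-/

open scoped RealInnerProductSpace

theorem add_sq_le_one_add_mul_sq_add {a b ε : ℝ} (hε : 0 < ε) :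
    (a + b) ^ 2 ≤ (1 + ε) * a ^ 2 + (1 + ε⁻¹) * b ^ 2 := by
  have hcross : 2 * a * b ≤ ε * a ^ 2 + ε⁻¹ * b ^ 2 := by
    have := sq_nonneg (ε * a - b)
    rw [← mul_le_mul_iff_of_pos_left hε]
    field_simp
    nlinarith
  nlinarith

theorem le_pow_mul_add_of_le_mul_add {a : ℕ → ℝ} {ρ b C : ℝ} (hρ : 0 ≤ ρ) (hC : 0 ≤ C)
    (hb : b ≤ (1 - ρ) * C) (h : ∀ t, a (t + 1) ≤ ρ * a t + b) (T : ℕ) :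
    a T ≤ ρ ^ T * a 0 + C := by
  induction T with
  | zero => simpa using hC
  | succ T ih =>
    calc a (T + 1) ≤ ρ * a T + b := h T
      _ ≤ ρ * (ρ ^ T * a 0 + C) + (1 - ρ) * C := by gcongr
      _ = ρ ^ (T + 1) * a 0 + C := by ring

section InnerProductSpace

variable {E : Type*} [NormedAddCommGroup E] [InnerProductSpace ℝ E]

theorem mul_sq_norm_sub_le_inner_of_strongConvex {F : E → ℝ} {G : E → E} {μ : ℝ}
    (hconv : ∀ x y, F x + ⟪G x, y - x⟫ + μ / 2 * ‖x - y‖ ^ 2 ≤ F y) (x y : E) :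
    μ * ‖x - y‖ ^ 2 ≤ ⟪G x - G y, x - y⟫ := by
  have hxy := hconv x y
  have hyx := hconv y x
  rw [← neg_sub x y, inner_neg_right] at hxy
  rw [norm_sub_rev y x] at hyx
  rw [inner_sub_left]
  linarith

theorem sq_norm_sub_smul_le {v w : E} {μ L : ℝ} (hμ : 0 ≤ μ) (hL : 0 < L)
    (hcoer : μ * ‖v‖ ^ 2 ≤ ⟪w, v⟫) (hlip : ‖w‖ ≤ L * ‖v‖) :
    ‖v - (μ / L ^ 2) • w‖ ^ 2 ≤ (1 - μ ^ 2 / L ^ 2) * ‖v‖ ^ 2 := by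
  have hη : 0 ≤ μ / L ^ 2 := by positivity
  have hw : ‖w‖ ^ 2 ≤ L ^ 2 * ‖v‖ ^ 2 := by
    rw [← mul_pow]; exact pow_le_pow_left₀ (norm_nonneg w) hlip 2
  calc ‖v - (μ / L ^ 2) • w‖ ^ 2
      = ‖v‖ ^ 2 - 2 * (μ / L ^ 2) * ⟪w, v⟫ + (μ / L ^ 2) ^ 2 * ‖w‖ ^ 2 := by
        rw [norm_sub_sq_real, real_inner_smul_right, norm_smul, Real.norm_of_nonneg hη,
          real_inner_comm]
        ring
    _ ≤ ‖v‖ ^ 2 - 2 * (μ / L ^ 2) * (μ * ‖v‖ ^ 2) + (μ / L ^ 2) ^ 2 * (L ^ 2 * ‖v‖ ^ 2) := by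
        gcongr
    _ = (1 - μ ^ 2 / L ^ 2) * ‖v‖ ^ 2 := by
        field_simp
        ring

theorem sq_norm_sub_smul_add_le {v w r : E} {μ L e : ℝ} (hμ : 0 < μ) (hμL : μ ≤ L)
    (hcoer : μ * ‖v‖ ^ 2 ≤ ⟪w, v⟫) (hlip : ‖w‖ ≤ L * ‖v‖) (hr : ‖r‖ ^ 2 ≤ e ^ 2) :
    ‖v - (μ / L ^ 2) • (w + r)‖ ^ 2 ≤
      (1 - μ ^ 2 / (2 * L ^ 2)) * ‖v‖ ^ 2 + 3 / L ^ 2 * e ^ 2 := by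
  have hL : 0 < L := hμ.trans_le hμL
  have hη : 0 ≤ μ / L ^ 2 := by positivity
  have hκ : 0 < μ ^ 2 / (2 * L ^ 2) := by positivity
  have hμL2 : μ ^ 2 ≤ L ^ 2 := pow_le_pow_left₀ hμ.le hμL 2
  have hexact := sq_norm_sub_smul_le hμ.le hL hcoer hlip
  have htri : ‖v - (μ / L ^ 2) • (w + r)‖ ≤ ‖v - (μ / L ^ 2) • w‖ + μ / L ^ 2 * ‖r‖ := by
    calc ‖v - (μ / L ^ 2) • (w + r)‖ = ‖(v - (μ / L ^ 2) • w) - (μ / L ^ 2) • r‖ := by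
          rw [smul_add, sub_sub]
      _ ≤ ‖v - (μ / L ^ 2) • w‖ + ‖(μ / L ^ 2) • r‖ := norm_sub_le _ _
      _ = ‖v - (μ / L ^ 2) • w‖ + μ / L ^ 2 * ‖r‖ := by rw [norm_smul, Real.norm_of_nonneg hη]
  calc ‖v - (μ / L ^ 2) • (w + r)‖ ^ 2
      ≤ (‖v - (μ / L ^ 2) • w‖ + μ / L ^ 2 * ‖r‖) ^ 2 := by gcongr
    _ ≤ (1 + μ ^ 2 / (2 * L ^ 2)) * ‖v - (μ / L ^ 2) • w‖ ^ 2
          + (1 + (μ ^ 2 / (2 * L ^ 2))⁻¹) * (μ / L ^ 2 * ‖r‖) ^ 2 :=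
        add_sq_le_one_add_mul_sq_add hκ
    _ ≤ (1 + μ ^ 2 / (2 * L ^ 2)) * ((1 - μ ^ 2 / L ^ 2) * ‖v‖ ^ 2)
          + (1 + (μ ^ 2 / (2 * L ^ 2))⁻¹) * ((μ / L ^ 2) ^ 2 * e ^ 2) := by
        rw [mul_pow]; gcongr
    _ = (1 - μ ^ 2 / (2 * L ^ 2)) * ‖v‖ ^ 2 + 3 / L ^ 2 * e ^ 2
          - μ ^ 4 / (2 * L ^ 4) * ‖v‖ ^ 2 - (L ^ 2 - μ ^ 2) / L ^ 4 * e ^ 2 := by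
        field_simp
        ring
    _ ≤ (1 - μ ^ 2 / (2 * L ^ 2)) * ‖v‖ ^ 2 + 3 / L ^ 2 * e ^ 2 := by
        have : 0 ≤ (L ^ 2 - μ ^ 2) / L ^ 4 * e ^ 2 := by
          have := sub_nonneg.mpr hμL2; positivity
        have : 0 ≤ μ ^ 4 / (2 * L ^ 4) * ‖v‖ ^ 2 := by positivity
        linarith

end InnerProductSpace

theorem stmt_1_general
    (d : ℕ)
    (F : EuclideanSpace ℝ (Fin d) → ℝ) (L μ : ℝ)
    (hμ : 0 < μ) (hμL : μ ≤ L)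
    (hsmooth : ∀ x y, ‖gradient F x - gradient F y‖ ≤ L * ‖x - y‖)
    (hconv : ∀ x y, F x + ⟪gradient F x, y - x⟫ + μ / 2 * ‖x - y‖ ^ 2 ≤ F y)
    (xstar : EuclideanSpace ℝ (Fin d))
    (hgrad0 : gradient F xstar = 0)
    (e : ℝ)
    (x g : ℕ → EuclideanSpace ℝ (Fin d))
    (hstep : ∀ t, x (t + 1) = x t - (μ / L ^ 2) • g t)
    (herr : ∀ t, ‖g t - gradient F (x t)‖ ^ 2 ≤ e ^ 2) :
    ∀ T : ℕ, ‖x T - xstar‖ ^ 2 ≤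
      (1 - μ ^ 2 / (2 * L ^ 2)) ^ T * ‖x 0 - xstar‖ ^ 2 + 6 * L ^ 2 / μ ^ 4 * e ^ 2 := by
  have hL : 0 < L := hμ.trans_le hμL
  have hρ : 0 ≤ 1 - μ ^ 2 / (2 * L ^ 2) := by
    rw [sub_nonneg, div_le_one (by positivity)]
    nlinarith
  have herr_sum : 3 / L ^ 2 * e ^ 2 ≤
      (1 - (1 - μ ^ 2 / (2 * L ^ 2))) * (6 * L ^ 2 / μ ^ 4 * e ^ 2) := by
    have hμL2 : μ ^ 2 ≤ L ^ 2 := pow_le_pow_left₀ hμ.le hμL 2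
    calc 3 / L ^ 2 * e ^ 2 ≤ 3 / μ ^ 2 * e ^ 2 := by gcongr
      _ = _ := by field_simp; ring
  refine le_pow_mul_add_of_le_mul_add hρ (by positivity) herr_sum fun t => ?_
  have hcoer := mul_sq_norm_sub_le_inner_of_strongConvex hconv (x t) xstar
  have hlip := hsmooth (x t) xstar
  rw [hgrad0, sub_zero] at hcoer hlip
  have hx : x (t + 1) - xstar =
      (x t - xstar) - (μ / L ^ 2) • (gradient F (x t) + (g t - gradient F (x t))) := by
    rw [hstep, add_sub_cancel]; abel
  rw [hx]
  exact sq_norm_sub_smul_add_le hμ hμL hcoer hlip (herr t)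

/-- **Strongly-convex convergence of Byzantine-resilient SGD**:
with learning rate `μ / L²` and per-iteration gradient-estimation error at most `e`,
the iterates converge exponentially fast to a ball of squared radius `(6L²/μ⁴)e²`
around the minimizer. -/
theorem stmt_1
    (d : ℕ) (hd : 0 < d)
    (F : EuclideanSpace ℝ (Fin d) → ℝ) (L μ : ℝ)
    (hμ : 0 < μ) (hμL : μ ≤ L)
    (hdiff : Differentiable ℝ F)
    (hsmooth : ∀ x y, ‖gradient F x - gradient F y‖ ≤ L * ‖x - y‖)
    (hconv : ∀ x y, F x + ⟪gradient F x, y - x⟫ + μ / 2 * ‖x - y‖ ^ 2 ≤ F y)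
    (xstar : EuclideanSpace ℝ (Fin d))
    (hmin : ∀ x, F xstar ≤ F x) (hgrad0 : gradient F xstar = 0)
    (e : ℝ) (he : 0 ≤ e)
    (x g : ℕ → EuclideanSpace ℝ (Fin d))
    (hstep : ∀ t, x (t + 1) = x t - (μ / L ^ 2) • g t)
    (herr : ∀ t, ‖g t - gradient F (x t)‖ ^ 2 ≤ e ^ 2) :
    ∀ T : ℕ, ‖x T - xstar‖ ^ 2 ≤
      (1 - μ ^ 2 / (2 * L ^ 2)) ^ T * ‖x 0 - xstar‖ ^ 2 + 6 * L ^ 2 / μ ^ 4 * e ^ 2 :=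
  stmt_1_general d F L μ hμ hμL hsmooth hconv xstar hgrad0 e x g hstep herr
end

section
/- Let d be a positive integer, let F : ℝ^d → ℝ be differentiable and L-smooth with L > 0, and let x* ∈ ℝ^d be a global minimizer of F (so F(x*) ≤ F(x) for all x and ∇F(x*) = 0). Let e ≥ 0 and let (x^t)_{t≥0}, (g^t)_{t≥0} be sequences in ℝ^d satisfying x^{t+1} = x^t − (1/(4L))·g^t and ‖g^t − ∇F(x^t)‖² ≤ e² for every t ≥ 0. Then for every T ≥ 0, (1/(T+1)) ∑_{t=0}^{T} ‖∇F(x^t)‖² ≤ (8L²/(T+1))·‖x^0 − x*‖² + 3e². -/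
/-!
With `η = 1/(4L)`, the descent lemma applied to the step `x - η g` gives
`F x - F (x - η g) ≥ η ⟪∇F x, g⟫ - ‖g‖² / (32 L)`, and expanding `‖g - ∇F x‖²` turns this into
`‖∇F x‖² ≤ 8L (F x - F (x - η g)) + ‖g - ∇F x‖²` (the slack is `3/4 ‖g‖²`). Summing over the
iterates telescopes the function values, and the total decrease `F x⁰ - F x^{T+1} ≤ F x⁰ - F x*`
is at most `L/2 ‖x⁰ - x*‖²`, again by the descent lemma, now at the critical point `x*`.
-/

open scoped RealInnerProductSpace

section Smooth

variable {E : Type*} [NormedAddCommGroup E] [InnerProductSpace ℝ E] [CompleteSpace E]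
  {F : E → ℝ} {L : ℝ}

theorem hasDerivAt_comp_add_smul (hF : Differentiable ℝ F) (a v : E) (t : ℝ) :
    HasDerivAt (fun s : ℝ => F (a + s • v)) ⟪gradient F (a + t • v), v⟫ t := by
  have hline : HasDerivAt (fun s : ℝ => a + s • v) v t := by
    simpa using ((hasDerivAt_id t).smul_const v).const_add a
  simpa [InnerProductSpace.toDual_apply_apply, Function.comp_def] using
    (hF (a + t • v)).hasGradientAt.hasFDerivAt.comp_hasDerivAt t hline

theorem le_add_inner_gradient_add_sq (hF : Differentiable ℝ F)
    (hsmooth : ∀ x y, ‖gradient F x - gradient F y‖ ≤ L * ‖x - y‖) (a b : E) :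
    F b ≤ F a + ⟪gradient F a, b - a⟫ + L / 2 * ‖b - a‖ ^ 2 := by
  set v := b - a
  let ψ : ℝ → ℝ := fun t => F (a + t • v) - t * ⟪gradient F a, v⟫ - L * t ^ 2 / 2 * ‖v‖ ^ 2
  have hψ : ∀ t, HasDerivAt ψ
      (⟪gradient F (a + t • v), v⟫ - ⟪gradient F a, v⟫ - L * t * ‖v‖ ^ 2) t := fun t => by
    have hlin : HasDerivAt (fun s : ℝ => s * ⟪gradient F a, v⟫) ⟪gradient F a, v⟫ t := by
      simpa using (hasDerivAt_id t).mul_const ⟪gradient F a, v⟫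
    have hsq : HasDerivAt (fun s : ℝ => L * s ^ 2 / 2 * ‖v‖ ^ 2) (L * t * ‖v‖ ^ 2) t :=
      ((((hasDerivAt_pow 2 t).const_mul L).div_const 2).mul_const (‖v‖ ^ 2)).congr_deriv
        (by push_cast; ring)
    exact ((hasDerivAt_comp_add_smul hF a v t).sub hlin).sub hsq
  have hψ_anti : AntitoneOn ψ (Set.Icc 0 1) := by
    refine antitoneOn_of_deriv_nonpos (convex_Icc 0 1)
      (fun t _ => (hψ t).continuousAt.continuousWithinAt)
      (fun t _ => (hψ t).differentiableAt.differentiableWithinAt) fun t ht => ?_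
    rw [interior_Icc] at ht
    have hlip : ‖gradient F (a + t • v) - gradient F a‖ ≤ L * (t * ‖v‖) := by
      simpa [norm_smul, abs_of_pos ht.1] using hsmooth (a + t • v) a
    have hinner : ⟪gradient F (a + t • v) - gradient F a, v⟫ ≤ L * t * ‖v‖ ^ 2 :=
      calc _ ≤ ‖gradient F (a + t • v) - gradient F a‖ * ‖v‖ := real_inner_le_norm _ _
        _ ≤ L * (t * ‖v‖) * ‖v‖ := by gcongr
        _ = L * t * ‖v‖ ^ 2 := by ring
    rw [(hψ t).deriv, ← inner_sub_left]
    linarith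
  have h01 := hψ_anti (Set.left_mem_Icc.2 zero_le_one) (Set.right_mem_Icc.2 zero_le_one)
    zero_le_one
  simp only [ψ, v, zero_smul, add_zero, one_smul, add_sub_cancel] at h01
  linarith

theorem sq_norm_gradient_le_of_inexact_step (hL : 0 < L) (hF : Differentiable ℝ F)
    (hsmooth : ∀ x y, ‖gradient F x - gradient F y‖ ≤ L * ‖x - y‖) (x g : E) :
    ‖gradient F x‖ ^ 2 ≤ 8 * L * (F x - F (x - (1 / (4 * L)) • g)) + ‖g - gradient F x‖ ^ 2 := by
  set η := 1 / (4 * L)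
  have hη : 0 < η := by positivity
  have hdescent := le_add_inner_gradient_add_sq hF hsmooth x (x - η • g)
  rw [sub_sub_cancel_left, inner_neg_right, real_inner_smul_right, norm_neg, norm_smul,
    Real.norm_of_nonneg hη.le] at hdescent
  have hdecrease : 2 * ⟪gradient F x, g⟫ - ‖g‖ ^ 2 / 4 ≤ 8 * L * (F x - F (x - η • g)) := by
    have hcoeff : 8 * L * (η * ⟪gradient F x, g⟫ - L / 2 * (η * ‖g‖) ^ 2)
        = 2 * ⟪gradient F x, g⟫ - ‖g‖ ^ 2 / 4 := by
      simp only [η]; field_simp; ring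
    rw [← hcoeff]
    exact mul_le_mul_of_nonneg_left (by linarith) (by positivity)
  have hpar := norm_sub_sq_real g (gradient F x)
  rw [real_inner_comm] at hpar
  nlinarith [sq_nonneg ‖g‖]

theorem sum_range_sq_norm_gradient_le (hL : 0 < L) (hF : Differentiable ℝ F)
    (hsmooth : ∀ x y, ‖gradient F x - gradient F y‖ ≤ L * ‖x - y‖) {e : ℝ} {x g : ℕ → E}
    (hstep : ∀ t, x (t + 1) = x t - (1 / (4 * L)) • g t)
    (herr : ∀ t, ‖g t - gradient F (x t)‖ ^ 2 ≤ e ^ 2) (n : ℕ) :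
    ∑ t ∈ Finset.range n, ‖gradient F (x t)‖ ^ 2 ≤ 8 * L * (F (x 0) - F (x n)) + n * e ^ 2 :=
  calc ∑ t ∈ Finset.range n, ‖gradient F (x t)‖ ^ 2
      ≤ ∑ t ∈ Finset.range n, (8 * L * (F (x t) - F (x (t + 1))) + e ^ 2) :=
        Finset.sum_le_sum fun t _ => by
          rw [hstep]
          linarith [sq_norm_gradient_le_of_inexact_step hL hF hsmooth (x t) (g t), herr t]
    _ = 8 * L * (F (x 0) - F (x n)) + n * e ^ 2 := by
        rw [Finset.sum_add_distrib, ← Finset.mul_sum, Finset.sum_range_sub']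
        simp

end Smooth

theorem stmt_2_general
    (d : ℕ)
    (F : EuclideanSpace ℝ (Fin d) → ℝ) (L : ℝ) (hL : 0 < L)
    (hdiff : Differentiable ℝ F)
    (hsmooth : ∀ x y, ‖gradient F x - gradient F y‖ ≤ L * ‖x - y‖)
    (xstar : EuclideanSpace ℝ (Fin d))
    (hmin : ∀ x, F xstar ≤ F x) (hgrad0 : gradient F xstar = 0)
    (e : ℝ)
    (x g : ℕ → EuclideanSpace ℝ (Fin d))
    (hstep : ∀ t, x (t + 1) = x t - (1 / (4 * L)) • g t)
    (herr : ∀ t, ‖g t - gradient F (x t)‖ ^ 2 ≤ e ^ 2) :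
    ∀ T : ℕ, (1 / (T + 1 : ℝ)) * ∑ t ∈ Finset.range (T + 1), ‖gradient F (x t)‖ ^ 2 ≤
      8 * L ^ 2 / (T + 1 : ℝ) * ‖x 0 - xstar‖ ^ 2 + 3 * e ^ 2 := by
  intro T
  have hsum := sum_range_sq_norm_gradient_le hL hdiff hsmooth hstep herr (T + 1)
  have hgap : F (x 0) - F (x (T + 1)) ≤ L / 2 * ‖x 0 - xstar‖ ^ 2 := by
    have hdescent := le_add_inner_gradient_add_sq hdiff hsmooth xstar (x 0)
    rw [hgrad0, inner_zero_left] at hdescent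
    linarith [hmin (x (T + 1))]
  push_cast at hsum
  calc (1 / (T + 1 : ℝ)) * ∑ t ∈ Finset.range (T + 1), ‖gradient F (x t)‖ ^ 2
      ≤ (1 / (T + 1 : ℝ)) * (8 * L ^ 2 * ‖x 0 - xstar‖ ^ 2 + (T + 1) * (3 * e ^ 2)) := by
        gcongr
        nlinarith [mul_le_mul_of_nonneg_left hgap (by positivity : 0 ≤ 8 * L),
          sq_nonneg e, sq_nonneg L, sq_nonneg ‖x 0 - xstar‖, (T.cast_nonneg : (0 : ℝ) ≤ T)]
    _ = 8 * L ^ 2 / (T + 1 : ℝ) * ‖x 0 - xstar‖ ^ 2 + 3 * e ^ 2 := by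
        field_simp

/-- **Non-convex convergence of Byzantine-resilient SGD**:
with learning rate `1/(4L)` and per-iteration gradient-estimation error at most `e`,
the average squared gradient norm decays at rate `1/T` up to the floor `3e²`. -/
theorem stmt_2
    (d : ℕ) (hd : 0 < d)
    (F : EuclideanSpace ℝ (Fin d) → ℝ) (L : ℝ) (hL : 0 < L)
    (hdiff : Differentiable ℝ F)
    (hsmooth : ∀ x y, ‖gradient F x - gradient F y‖ ≤ L * ‖x - y‖)
    (xstar : EuclideanSpace ℝ (Fin d))
    (hmin : ∀ x, F xstar ≤ F x) (hgrad0 : gradient F xstar = 0)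
    (e : ℝ) (he : 0 ≤ e)
    (x g : ℕ → EuclideanSpace ℝ (Fin d))
    (hstep : ∀ t, x (t + 1) = x t - (1 / (4 * L)) • g t)
    (herr : ∀ t, ‖g t - gradient F (x t)‖ ^ 2 ≤ e ^ 2) :
    ∀ T : ℕ, (1 / (T + 1 : ℝ)) * ∑ t ∈ Finset.range (T + 1), ‖gradient F (x t)‖ ^ 2 ≤
      8 * L ^ 2 / (T + 1 : ℝ) * ‖x 0 - xstar‖ ^ 2 + 3 * e ^ 2 :=
  stmt_2_general d F L hL hdiff hsmooth xstar hmin hgrad0 e x g hstep herr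
end

section
/- Let (Ω, P) be a probability space, let d ≥ 1, let S be a finite nonempty index set, and let σ, b, κ, Υ > 0. Let (g_r)_{r∈S} be independent, square-integrable random vectors in ℝ^d with means μ_r = E[g_r] satisfying E[‖g_r − μ_r‖²] ≤ σ²/b for every r ∈ S, and let μ̄ ∈ ℝ^d be a vector with ‖μ_r − μ̄‖ ≤ κ for every r ∈ S. Let ĝ be any random vector in ℝ^d such that ‖ĝ(ω) − (1/|S|)∑_{r∈S} g_r(ω)‖ ≤ Υ for every ω ∈ Ω. Then E[‖μ̄ − ĝ‖²] ≤ 3σ²/(b|S|) + 3κ² + 3Υ². -/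
/-! With `m` the average of the means `μ r` and `ḡ` the sample mean, split
`μ̄ - ĝ = (μ̄ - m) + (m - ḡ) + (ḡ - ĝ)` and use `‖x + y + z‖² ≤ 3 (‖x‖² + ‖y‖² + ‖z‖²)`.
The outer pieces are at most `κ` (an average of points of the ball of radius `κ` about `μ̄`
stays in it) and `Υ`. For the middle one, independence turns each cross term
`E⟪g r - μ r, g s - μ s⟫` into `⟪E (g r - μ r), E (g s - μ s)⟫ = 0`, so
`E‖ḡ - m‖² = |S|⁻² ∑ r, E‖g r - μ r‖² ≤ σ² / (b |S|)`. -/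

open MeasureTheory ProbabilityTheory Finset
open scoped RealInnerProductSpace

lemma norm_sub_sq_le_three_mul {F : Type*} [SeminormedAddCommGroup F] (a b c d : F) :
    ‖a - d‖ ^ 2 ≤ 3 * (‖a - b‖ ^ 2 + ‖b - c‖ ^ 2 + ‖c - d‖ ^ 2) :=
  calc ‖a - d‖ ^ 2 ≤ (‖a - b‖ + ‖b - c‖ + ‖c - d‖) ^ 2 := by
        gcongr
        calc ‖a - d‖ ≤ ‖a - c‖ + ‖c - d‖ := norm_sub_le_norm_sub_add_norm_sub a c d
          _ ≤ ‖a - b‖ + ‖b - c‖ + ‖c - d‖ := by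
            gcongr
            exact norm_sub_le_norm_sub_add_norm_sub a b c
    _ ≤ 3 * (‖a - b‖ ^ 2 + ‖b - c‖ ^ 2 + ‖c - d‖ ^ 2) := by
        nlinarith [sq_nonneg (‖a - b‖ - ‖b - c‖), sq_nonneg (‖b - c‖ - ‖c - d‖),
          sq_nonneg (‖a - b‖ - ‖c - d‖)]

lemma norm_inv_card_smul_sum_sub_le {F ι : Type*} [SeminormedAddCommGroup F] [NormedSpace ℝ F]
    [Fintype ι] [Nonempty ι] {v : ι → F} {c : F} {κ : ℝ} (h : ∀ r, ‖v r - c‖ ≤ κ) :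
    ‖(Fintype.card ι : ℝ)⁻¹ • ∑ r, v r - c‖ ≤ κ := by
  have hweights : ∑ _r : ι, (Fintype.card ι : ℝ)⁻¹ = 1 := by
    rw [sum_const, card_univ, nsmul_eq_mul, mul_inv_cancel₀ (by positivity)]
  have hmem := (convex_closedBall c κ).sum_mem (fun _ _ => by positivity) hweights
    (fun r _ => mem_closedBall_iff_norm.2 (h r))
  rw [← smul_sum] at hmem
  exact mem_closedBall_iff_norm.1 hmem

lemma MeasureTheory.MemLp.integrable_inner {Ω E : Type*} [MeasurableSpace Ω] {P : Measure Ω}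
    [NormedAddCommGroup E] [InnerProductSpace ℝ E] {X Y : Ω → E}
    (hX : MemLp X 2 P) (hY : MemLp Y 2 P) :
    Integrable (fun ω => ⟪X ω, Y ω⟫) P :=
  memLp_one_iff_integrable.1 ((innerSL ℝ).memLp_of_bilin 1 hX hY)

section IndependentSum

variable {Ω E ι : Type*} [MeasurableSpace Ω] {P : Measure Ω}
  [NormedAddCommGroup E] [InnerProductSpace ℝ E] [CompleteSpace E]
  [MeasurableSpace E] [BorelSpace E]

lemma ProbabilityTheory.IndepFun.integral_inner {X Y : Ω → E} (h : IndepFun X Y P)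
    (hX : Integrable X P) (hY : Integrable Y P) :
    ∫ ω, ⟪X ω, Y ω⟫ ∂P = ⟪∫ ω, X ω ∂P, ∫ ω, Y ω ∂P⟫ :=
  h.integral_bilin hX hY (innerSL ℝ)

theorem ProbabilityTheory.iIndepFun.integral_norm_sum_sq [IsFiniteMeasure P] {X : ι → Ω → E}
    (hX : iIndepFun X P) (hL2 : ∀ r, MemLp (X r) 2 P) (h0 : ∀ r, ∫ ω, X r ω ∂P = 0) (s : Finset ι) :
    ∫ ω, ‖∑ r ∈ s, X r ω‖ ^ 2 ∂P = ∑ r ∈ s, ∫ ω, ‖X r ω‖ ^ 2 ∂P := by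
  have hint : ∀ r t, Integrable (fun ω => ⟪X r ω, X t ω⟫) P :=
    fun r t => (hL2 r).integrable_inner (hL2 t)
  have hcross : ∀ r t, r ≠ t → ∫ ω, ⟪X r ω, X t ω⟫ ∂P = 0 := fun r t hrt => by
    rw [(hX.indepFun hrt).integral_inner ((hL2 r).integrable one_le_two)
      ((hL2 t).integrable one_le_two), h0 r, inner_zero_left]
  calc ∫ ω, ‖∑ r ∈ s, X r ω‖ ^ 2 ∂P = ∫ ω, ∑ r ∈ s, ∑ t ∈ s, ⟪X r ω, X t ω⟫ ∂P := by
        simp_rw [← real_inner_self_eq_norm_sq, sum_inner, inner_sum]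
    _ = ∑ r ∈ s, ∑ t ∈ s, ∫ ω, ⟪X r ω, X t ω⟫ ∂P := by
        rw [integral_finsetSum _ fun r _ => integrable_finsetSum _ fun t _ => hint r t]
        exact sum_congr rfl fun r _ => integral_finsetSum _ fun t _ => hint r t
    _ = ∑ r ∈ s, ∫ ω, ⟪X r ω, X r ω⟫ ∂P :=
        sum_congr rfl fun r hr => sum_eq_single_of_mem r hr fun t _ htr => hcross r t htr.symm
    _ = ∑ r ∈ s, ∫ ω, ‖X r ω‖ ^ 2 ∂P := by simp_rw [real_inner_self_eq_norm_sq]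

theorem ProbabilityTheory.iIndepFun.integral_norm_inv_card_smul_sum_sub_sq_le
    [IsProbabilityMeasure P] [Fintype ι] {g : ι → Ω → E} (hg : iIndepFun g P)
    (hL2 : ∀ r, MemLp (g r) 2 P) {μ : ι → E} (hμ : ∀ r, ∫ ω, g r ω ∂P = μ r) {v : ℝ}
    (hvar : ∀ r, ∫ ω, ‖g r ω - μ r‖ ^ 2 ∂P ≤ v) :
    ∫ ω, ‖(Fintype.card ι : ℝ)⁻¹ • ∑ r, (g r ω - μ r)‖ ^ 2 ∂P ≤ v / Fintype.card ι := by
  set R : ℝ := (Fintype.card ι : ℝ)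
  have hcentered : iIndepFun (fun r ω => g r ω - μ r) P :=
    hg.comp _ fun r => measurable_id.sub_const (μ r)
  have hmean_zero : ∀ r, ∫ ω, g r ω - μ r ∂P = 0 := fun r => by
    rw [integral_sub ((hL2 r).integrable one_le_two) (integrable_const _), hμ r]
    simp
  calc ∫ ω, ‖R⁻¹ • ∑ r, (g r ω - μ r)‖ ^ 2 ∂P
      = R⁻¹ ^ 2 * ∫ ω, ‖∑ r, (g r ω - μ r)‖ ^ 2 ∂P := by
        simp_rw [norm_smul, mul_pow, Real.norm_eq_abs, sq_abs, integral_const_mul]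
    _ = R⁻¹ ^ 2 * ∑ r, ∫ ω, ‖g r ω - μ r‖ ^ 2 ∂P := by
        rw [hcentered.integral_norm_sum_sq (fun r => (hL2 r).sub (memLp_const _)) hmean_zero]
    _ ≤ R⁻¹ ^ 2 * (R * v) := by
        gcongr
        calc ∑ r, ∫ ω, ‖g r ω - μ r‖ ^ 2 ∂P ≤ ∑ _r : ι, v := sum_le_sum fun r _ => hvar r
          _ = R * v := by rw [sum_const, card_univ, nsmul_eq_mul]
    _ = v / R := by
        rcases eq_or_ne R 0 with hR | hR
        · simp [hR]
        · field_simp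

end IndependentSum

theorem stmt_3_general
    (Ω : Type*) [MeasurableSpace Ω] (P : Measure Ω) [IsProbabilityMeasure P]
    (d : ℕ)
    (ι : Type*) [Fintype ι] [Nonempty ι]
    (σ b κ Υ : ℝ)
    (g : ι → Ω → EuclideanSpace ℝ (Fin d))
    (hindep : iIndepFun g P)
    (hL2 : ∀ r, MemLp (g r) 2 P)
    (μ : ι → EuclideanSpace ℝ (Fin d))
    (hmean : ∀ r, μ r = ∫ ω, g r ω ∂P)
    (hvar : ∀ r, ∫ ω, ‖g r ω - μ r‖ ^ 2 ∂P ≤ σ ^ 2 / b)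
    (μbar : EuclideanSpace ℝ (Fin d)) (hdis : ∀ r, ‖μ r - μbar‖ ≤ κ)
    (ghat : Ω → EuclideanSpace ℝ (Fin d))
    (hghat : ∀ ω, ‖ghat ω - (Fintype.card ι : ℝ)⁻¹ • ∑ r, g r ω‖ ≤ Υ) :
    ∫ ω, ‖μbar - ghat ω‖ ^ 2 ∂P ≤
      3 * σ ^ 2 / (b * Fintype.card ι) + 3 * κ ^ 2 + 3 * Υ ^ 2 := by
  set R : ℝ := (Fintype.card ι : ℝ)
  set D := fun ω => R⁻¹ • ∑ r, (g r ω - μ r)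
  have hbias : ‖μbar - R⁻¹ • ∑ r, μ r‖ ≤ κ :=
    (norm_sub_rev _ _).trans_le (norm_inv_card_smul_sum_sub_le hdis)
  have hpointwise : ∀ ω, ‖μbar - ghat ω‖ ^ 2 ≤ 3 * ‖D ω‖ ^ 2 + 3 * (κ ^ 2 + Υ ^ 2) := by
    intro ω
    have hnoise : ‖R⁻¹ • ∑ r, μ r - R⁻¹ • ∑ r, g r ω‖ = ‖D ω‖ := by
      rw [norm_sub_rev, ← smul_sub, ← sum_sub_distrib]
    have hsplit := norm_sub_sq_le_three_mul μbar (R⁻¹ • ∑ r, μ r) (R⁻¹ • ∑ r, g r ω) (ghat ω)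
    rw [hnoise, norm_sub_rev (R⁻¹ • ∑ r, g r ω)] at hsplit
    linarith [pow_le_pow_left₀ (norm_nonneg _) hbias 2,
      pow_le_pow_left₀ (norm_nonneg _) (hghat ω) 2]
  have hD : Integrable (fun ω => ‖D ω‖ ^ 2) P := by
    have hsum : MemLp (fun ω => ∑ r, (g r ω - μ r)) 2 P :=
      memLp_finsetSum _ fun r _ => (hL2 r).sub (memLp_const (μ r))
    exact (hsum.const_smul R⁻¹).integrable_norm_pow two_ne_zero
  calc ∫ ω, ‖μbar - ghat ω‖ ^ 2 ∂P
      ≤ ∫ ω, (3 * ‖D ω‖ ^ 2 + 3 * (κ ^ 2 + Υ ^ 2)) ∂P :=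
        integral_mono_of_nonneg (ae_of_all _ fun ω => by positivity)
          ((hD.const_mul 3).add (integrable_const _)) (ae_of_all _ hpointwise)
    _ = 3 * ∫ ω, ‖D ω‖ ^ 2 ∂P + 3 * (κ ^ 2 + Υ ^ 2) := by
        rw [integral_add (hD.const_mul 3) (integrable_const _), integral_const_mul]
        simp
    _ ≤ 3 * (σ ^ 2 / b / R) + 3 * (κ ^ 2 + Υ ^ 2) := by
        gcongr
        exact hindep.integral_norm_inv_card_smul_sum_sub_sq_le hL2 (fun r => (hmean r).symm) hvar
    _ = 3 * σ ^ 2 / (b * R) + 3 * κ ^ 2 + 3 * Υ ^ 2 := by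
        rw [div_div]
        ring

/-- **Expected squared deviation of the robustly estimated gradient from the true
global gradient**: if the estimate `ĝ` is always within `Υ` of the sample mean of the
independent stochastic gradients `g_r` (each with mean `μ_r`, variance at most `σ²/b`,
and `‖μ_r − μ̄‖ ≤ κ`), then `E‖μ̄ − ĝ‖² ≤ 3σ²/(b|S|) + 3κ² + 3Υ²`. -/
theorem stmt_3
    (Ω : Type*) [MeasurableSpace Ω] (P : Measure Ω) [IsProbabilityMeasure P]
    (d : ℕ) (hd : 0 < d)
    (ι : Type*) [Fintype ι] [Nonempty ι]
    (σ b κ Υ : ℝ) (hσ : 0 < σ) (hb : 0 < b) (hκ : 0 < κ) (hΥ : 0 < Υ)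
    (g : ι → Ω → EuclideanSpace ℝ (Fin d))
    (hindep : iIndepFun g P)
    (hL2 : ∀ r, MemLp (g r) 2 P)
    (μ : ι → EuclideanSpace ℝ (Fin d))
    (hmean : ∀ r, μ r = ∫ ω, g r ω ∂P)
    (hvar : ∀ r, ∫ ω, ‖g r ω - μ r‖ ^ 2 ∂P ≤ σ ^ 2 / b)
    (μbar : EuclideanSpace ℝ (Fin d)) (hdis : ∀ r, ‖μ r - μbar‖ ≤ κ)
    (ghat : Ω → EuclideanSpace ℝ (Fin d)) (hmeas : AEStronglyMeasurable ghat P)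
    (hghat : ∀ ω, ‖ghat ω - (Fintype.card ι : ℝ)⁻¹ • ∑ r, g r ω‖ ≤ Υ) :
    ∫ ω, ‖μbar - ghat ω‖ ^ 2 ∂P ≤
      3 * σ ^ 2 / (b * Fintype.card ι) + 3 * κ ^ 2 + 3 * Υ ^ 2 :=
  stmt_3_general Ω P d ι σ b κ Υ g hindep hL2 μ hmean hvar μbar hdis ghat hghat
end

section
/- Let d ≥ 1, let S be a finite nonempty index set, let σ̂, κ ≥ 0, and let (y_i)_{i∈S} and (μ_i)_{i∈S} be families of vectors in ℝ^d and μ̄ ∈ ℝ^d a vector with ‖μ_i − μ̄‖ ≤ κ for every i ∈ S. Suppose that for every unit vector v ∈ ℝ^d, (1/|S|) ∑_{i∈S} ⟨y_i − μ_i, v⟩² ≤ σ̂². Then for every unit vector v ∈ ℝ^d, (1/|S|) ∑_{i∈S} ⟨y_i − ȳ_S, v⟩² ≤ 6σ̂² + 16κ², where ȳ_S = (1/|S|) ∑_{i∈S} y_i is the sample mean. -/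
/-!
The sample mean minimises the directional second moment, so the spread of the `y i` about `ȳ`
in direction `v` is at most their spread about `μ̄`. Splitting `y i - μ̄ = (y i - μ i) + (μ i - μ̄)`
and using `(a + b)² ≤ 2a² + 2b²` together with `|⟪μ i - μ̄, v⟫| ≤ κ` bounds the latter by
`2σ̂² + 2κ²`.
-/

open scoped RealInnerProductSpace BigOperators

theorem Fintype.sum_sq_sub_mean_le_sum_sq_sub {ι : Type*} [Fintype ι] (t : ι → ℝ) (c : ℝ) :
    ∑ i, (t i - (Fintype.card ι : ℝ)⁻¹ * ∑ j, t j) ^ 2 ≤ ∑ i, (t i - c) ^ 2 := by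
  set m := (Fintype.card ι : ℝ)⁻¹ * ∑ j, t j
  have sum_sub_mean : ∑ i, (t i - m) = 0 := by
    rcases isEmpty_or_nonempty ι with _ | _
    · simp
    · have hn : (Fintype.card ι : ℝ) ≠ 0 := by positivity
      rw [Finset.sum_sub_distrib, Finset.sum_const, Finset.card_univ, nsmul_eq_mul,
        mul_inv_cancel_left₀ hn, sub_self]
  calc ∑ i, (t i - m) ^ 2
      ≤ ∑ i, (t i - m) ^ 2 + 2 * (m - c) * ∑ i, (t i - m) + ∑ _i : ι, (m - c) ^ 2 := by
        rw [sum_sub_mean, mul_zero, add_zero]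
        exact le_add_of_nonneg_right (Finset.sum_nonneg fun _ _ => sq_nonneg _)
    _ = ∑ i, (t i - c) ^ 2 := by
      rw [Finset.mul_sum, ← Finset.sum_add_distrib, ← Finset.sum_add_distrib]
      exact Finset.sum_congr rfl fun i _ => by ring

section InnerProductSpace

variable {E : Type*} [NormedAddCommGroup E] [InnerProductSpace ℝ E]

theorem sum_inner_sub_mean_sq_le {ι : Type*} [Fintype ι] (x : ι → E) (c v : E) :
    ∑ i, ⟪x i - (Fintype.card ι : ℝ)⁻¹ • ∑ j, x j, v⟫ ^ 2 ≤ ∑ i, ⟪x i - c, v⟫ ^ 2 := by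
  simpa only [inner_sub_left, real_inner_smul_left, sum_inner] using
    Fintype.sum_sq_sub_mean_le_sum_sq_sub (fun i => ⟪x i, v⟫) ⟪c, v⟫

theorem real_inner_sq_le_sq {u v : E} {κ : ℝ} (hu : ‖u‖ ≤ κ) (hv : ‖v‖ = 1) :
    ⟪u, v⟫ ^ 2 ≤ κ ^ 2 := by
  have h : |⟪u, v⟫| ≤ κ := (abs_real_inner_le_norm u v).trans (by rwa [hv, mul_one])
  simpa only [sq_abs] using pow_le_pow_left₀ (abs_nonneg _) h 2

end InnerProductSpace

theorem stmt_4_general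
    (d : ℕ)
    (ι : Type*) [Fintype ι]
    (σhat κ : ℝ)
    (y μ : ι → EuclideanSpace ℝ (Fin d))
    (μbar : EuclideanSpace ℝ (Fin d))
    (hdis : ∀ i, ‖μ i - μbar‖ ≤ κ)
    (hconc : ∀ v : EuclideanSpace ℝ (Fin d), ‖v‖ = 1 →
      (Fintype.card ι : ℝ)⁻¹ * ∑ i, ⟪y i - μ i, v⟫ ^ 2 ≤ σhat ^ 2) :
    ∀ v : EuclideanSpace ℝ (Fin d), ‖v‖ = 1 →
      (Fintype.card ι : ℝ)⁻¹ *
          ∑ i, ⟪y i - (Fintype.card ι : ℝ)⁻¹ • ∑ j, y j, v⟫ ^ 2 ≤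
        6 * σhat ^ 2 + 16 * κ ^ 2 := by
  intro v hv
  set n : ℝ := (Fintype.card ι : ℝ)
  have split (i : ι) : ⟪y i - μbar, v⟫ ^ 2 ≤ 2 * ⟪y i - μ i, v⟫ ^ 2 + 2 * κ ^ 2 := by
    rw [← sub_add_sub_cancel (y i) (μ i) μbar, inner_add_left]
    nlinarith [add_sq_le (a := ⟪y i - μ i, v⟫) (b := ⟪μ i - μbar, v⟫),
      real_inner_sq_le_sq (hdis i) hv]
  calc n⁻¹ * ∑ i, ⟪y i - n⁻¹ • ∑ j, y j, v⟫ ^ 2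
      ≤ n⁻¹ * ∑ i, ⟪y i - μbar, v⟫ ^ 2 :=
        mul_le_mul_of_nonneg_left (sum_inner_sub_mean_sq_le y μbar v) (by positivity)
    _ ≤ n⁻¹ * ∑ i, (2 * ⟪y i - μ i, v⟫ ^ 2 + 2 * κ ^ 2) := by gcongr with i; exact split i
    _ = 2 * (n⁻¹ * ∑ i, ⟪y i - μ i, v⟫ ^ 2) + 2 * (n⁻¹ * n) * κ ^ 2 := by
      simp only [Finset.sum_add_distrib, ← Finset.mul_sum, Finset.sum_const, Finset.card_univ,
        nsmul_eq_mul, n]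
      ring
    _ ≤ 2 * σhat ^ 2 + 2 * 1 * κ ^ 2 := by gcongr; exacts [hconc v hv, inv_mul_le_one]
    _ ≤ 6 * σhat ^ 2 + 16 * κ ^ 2 := by linarith [sq_nonneg σhat, sq_nonneg κ]

/-- **From concentration about individual means to concentration about the sample mean**:
a directional second-moment bound of the points `y_i` about their individual means `μ_i`
transfers to a directional second-moment bound about their common sample mean, at the cost
of the dissimilarity `κ` of the `μ_i` from a common center `μ̄`. -/
theorem stmt_4
    (d : ℕ) (hd : 0 < d)
    (ι : Type*) [Fintype ι] [Nonempty ι]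
    (σhat κ : ℝ) (hσ : 0 ≤ σhat) (hκ : 0 ≤ κ)
    (y μ : ι → EuclideanSpace ℝ (Fin d))
    (μbar : EuclideanSpace ℝ (Fin d))
    (hdis : ∀ i, ‖μ i - μbar‖ ≤ κ)
    (hconc : ∀ v : EuclideanSpace ℝ (Fin d), ‖v‖ = 1 →
      (Fintype.card ι : ℝ)⁻¹ * ∑ i, ⟪y i - μ i, v⟫ ^ 2 ≤ σhat ^ 2) :
    ∀ v : EuclideanSpace ℝ (Fin d), ‖v‖ = 1 →
      (Fintype.card ι : ℝ)⁻¹ *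
          ∑ i, ⟪y i - (Fintype.card ι : ℝ)⁻¹ • ∑ j, y j, v⟫ ^ 2 ≤
        6 * σhat ^ 2 + 16 * κ ^ 2 :=
  stmt_4_general d ι σhat κ y μ μbar hdis hconc
end

section
/- Let d ≥ 1, let S be a finite nonempty index set, let (g_i)_{i∈S} be vectors in ℝ^d with sample mean g_S = (1/|S|)∑_{i∈S} g_i, and let σ₀ ≥ 0 be such that for every unit vector v ∈ ℝ^d, (1/|S|) ∑_{i∈S} ⟨g_i − g_S, v⟩² ≤ σ₀². Then for every ε₁ ∈ [0, 1/2) and every nonempty subset T ⊆ S with |T| ≥ (1−ε₁)|S|, the sample mean g_T = (1/|T|)∑_{i∈T} g_i satisfies ‖g_T − g_S‖ ≤ 2σ₀√ε₁. -/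
open scoped RealInnerProductSpace BigOperators

/-! Centre the points at the mean of `S`. The centred points sum to zero over `S`, so their sum
over `T` is minus their sum over the small set `S \ T`, which Cauchy–Schwarz bounds by
`√(|S \ T| · |S| σ₀²) ≤ |S| σ₀ √ε₁`. Testing this in the direction of `g_T − g_S` gives
`|T| ‖g_T − g_S‖ ≤ |S| σ₀ √ε₁`, and `|S| ≤ 2 |T|` because `ε₁ < 1/2`. -/

namespace Finset

variable {ι E : Type*}

theorem sq_sum_le_card_sdiff_mul_sum_sq [DecidableEq ι] {S T : Finset ι} (hTS : T ⊆ S)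
    {a : ι → ℝ} (hsum : ∑ i ∈ S, a i = 0) :
    (∑ i ∈ T, a i) ^ 2 ≤ #(S \ T) * ∑ i ∈ S, a i ^ 2 := by
  have hT : ∑ i ∈ T, a i = -∑ i ∈ S \ T, a i := by
    linarith [sum_sdiff (f := a) hTS]
  calc (∑ i ∈ T, a i) ^ 2 = (∑ i ∈ S \ T, a i) ^ 2 := by rw [hT, neg_sq]
    _ ≤ #(S \ T) * ∑ i ∈ S \ T, a i ^ 2 := sq_sum_le_card_mul_sum_sq
    _ ≤ #(S \ T) * ∑ i ∈ S, a i ^ 2 := by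
      gcongr
      exact sdiff_subset

section SampleMean

variable [AddCommGroup E] [Module ℝ E]

noncomputable def sampleMean (S : Finset ι) (g : ι → E) : E :=
  (#S : ℝ)⁻¹ • ∑ i ∈ S, g i

theorem card_smul_sampleMean_sub {T : Finset ι} (hT : T.Nonempty) (g : ι → E) (c : E) :
    (#T : ℝ) • (T.sampleMean g - c) = ∑ i ∈ T, (g i - c) := by
  have hcard : (#T : ℝ) ≠ 0 := by exact_mod_cast hT.card_pos.ne'
  rw [sampleMean, smul_sub, smul_inv_smul₀ hcard, sum_sub_distrib, sum_const,
    Nat.cast_smul_eq_nsmul]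

theorem sum_sub_sampleMean (S : Finset ι) (g : ι → E) :
    ∑ i ∈ S, (g i - S.sampleMean g) = 0 := by
  rcases S.eq_empty_or_nonempty with rfl | hS
  · exact sum_empty
  · rw [← card_smul_sampleMean_sub hS, sub_self, smul_zero]

end SampleMean

section InnerProductSpace

variable [NormedAddCommGroup E] [InnerProductSpace ℝ E]

theorem sq_card_mul_inner_sampleMean_sub_le [DecidableEq ι] {S T : Finset ι} (hTS : T ⊆ S)
    (g : ι → E) (v : E) :
    (#T * ⟪T.sampleMean g - S.sampleMean g, v⟫) ^ 2 ≤
      #(S \ T) * ∑ i ∈ S, ⟪g i - S.sampleMean g, v⟫ ^ 2 := by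
  rcases T.eq_empty_or_nonempty with rfl | hT
  · rw [card_empty, Nat.cast_zero, zero_mul, sq, zero_mul]
    positivity
  have hsum : ∑ i ∈ S, ⟪g i - S.sampleMean g, v⟫ = 0 := by
    rw [← sum_inner, sum_sub_sampleMean, inner_zero_left]
  rw [← real_inner_smul_left, card_smul_sampleMean_sub hT, sum_inner]
  exact sq_sum_le_card_sdiff_mul_sum_sq hTS hsum

theorem sq_card_mul_norm_sampleMean_sub_le [DecidableEq ι] {S T : Finset ι} (hTS : T ⊆ S)
    (g : ι → E) {σ : ℝ} (hconc : ∀ v : E, ‖v‖ = 1 →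
      (#S : ℝ)⁻¹ * ∑ i ∈ S, ⟪g i - S.sampleMean g, v⟫ ^ 2 ≤ σ ^ 2) :
    (#T * ‖T.sampleMean g - S.sampleMean g‖) ^ 2 ≤ #(S \ T) * (#S * σ ^ 2) := by
  set δ := T.sampleMean g - S.sampleMean g
  by_cases hδ : δ = 0
  · rw [hδ, norm_zero, mul_zero, sq, zero_mul]
    positivity
  have hδv : ‖δ‖ = ⟪δ, ‖δ‖⁻¹ • δ⟫ := by
    rw [real_inner_smul_right, real_inner_self_eq_norm_sq, sq, inv_mul_cancel_left₀]
    exact norm_ne_zero_iff.mpr hδ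
  have hmoment : ∑ i ∈ S, ⟪g i - S.sampleMean g, ‖δ‖⁻¹ • δ⟫ ^ 2 ≤ #S * σ ^ 2 := by
    rcases S.eq_empty_or_nonempty with rfl | hS
    · rw [sum_empty, card_empty, Nat.cast_zero, zero_mul]
    · have hcard : (0 : ℝ) < #S := by exact_mod_cast hS.card_pos
      exact (inv_mul_le_iff₀ hcard).mp (hconc _ (norm_smul_inv_norm hδ))
  calc (#T * ‖δ‖) ^ 2 = (#T * ⟪δ, ‖δ‖⁻¹ • δ⟫) ^ 2 := by rw [← hδv]
    _ ≤ #(S \ T) * ∑ i ∈ S, ⟪g i - S.sampleMean g, ‖δ‖⁻¹ • δ⟫ ^ 2 :=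
      sq_card_mul_inner_sampleMean_sub_le hTS g _
    _ ≤ #(S \ T) * (#S * σ ^ 2) := mul_le_mul_of_nonneg_left hmoment (Nat.cast_nonneg _)

end InnerProductSpace

end Finset

open Finset

theorem stmt_8_general
    (d : ℕ)
    (ι : Type*)
    (S : Finset ι)
    (g : ι → EuclideanSpace ℝ (Fin d))
    (σ₀ : ℝ) (hσ₀ : 0 ≤ σ₀)
    (hconc : ∀ v : EuclideanSpace ℝ (Fin d), ‖v‖ = 1 →
      (S.card : ℝ)⁻¹ * ∑ i ∈ S, ⟪g i - (S.card : ℝ)⁻¹ • ∑ j ∈ S, g j, v⟫ ^ 2 ≤ σ₀ ^ 2) :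
    ∀ ε₁ : ℝ, 0 ≤ ε₁ → ε₁ < 1 / 2 →
      ∀ T : Finset ι, T ⊆ S → T.Nonempty → (1 - ε₁) * S.card ≤ T.card →
        ‖(T.card : ℝ)⁻¹ • ∑ i ∈ T, g i - (S.card : ℝ)⁻¹ • ∑ j ∈ S, g j‖ ≤
          2 * σ₀ * Real.sqrt ε₁ := by
  intro ε₁ hε₁ hε₁_half T hTS hT hcard
  classical
  have hT_pos : (0 : ℝ) < #T := by exact_mod_cast hT.card_pos
  have hsdiff : (#(S \ T) : ℝ) ≤ ε₁ * #S := by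
    rw [cast_card_sdiff hTS]
    linarith
  have hS_le : (#S : ℝ) ≤ 2 * #T := by nlinarith
  have hsq : (#T * ‖T.sampleMean g - S.sampleMean g‖) ^ 2 ≤ (#T * (2 * σ₀ * √ε₁)) ^ 2 :=
    calc _ ≤ #(S \ T) * (#S * σ₀ ^ 2) := sq_card_mul_norm_sampleMean_sub_le hTS g hconc
      _ ≤ ε₁ * #S * (#S * σ₀ ^ 2) := by gcongr
      _ ≤ ε₁ * (2 * #T) * (2 * #T * σ₀ ^ 2) := by gcongr
      _ = (#T * (2 * σ₀ * √ε₁)) ^ 2 := by rw [mul_pow, mul_pow, mul_pow, Real.sq_sqrt hε₁]; ring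
  have hle := pow_le_pow_iff_left₀ (by positivity) (by positivity) two_ne_zero |>.mp hsq
  exact le_of_mul_le_mul_left hle hT_pos

/-- **Resilience of a well-concentrated set around its empirical mean**: if the
empirical directional second moment of the points `g_i`, `i ∈ S`, about their sample
mean is at most `σ₀²` in every direction, then every subset `T ⊆ S` containing at
least a `(1 − ε₁)` fraction of `S` (with `ε₁ < 1/2`) has sample mean within
`2σ₀√ε₁` of the sample mean of `S`. -/
theorem stmt_8
    (d : ℕ) (hd : 0 < d)
    (ι : Type*)
    (S : Finset ι) (hS : S.Nonempty)
    (g : ι → EuclideanSpace ℝ (Fin d))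
    (σ₀ : ℝ) (hσ₀ : 0 ≤ σ₀)
    (hconc : ∀ v : EuclideanSpace ℝ (Fin d), ‖v‖ = 1 →
      (S.card : ℝ)⁻¹ * ∑ i ∈ S, ⟪g i - (S.card : ℝ)⁻¹ • ∑ j ∈ S, g j, v⟫ ^ 2 ≤ σ₀ ^ 2) :
    ∀ ε₁ : ℝ, 0 ≤ ε₁ → ε₁ < 1 / 2 →
      ∀ T : Finset ι, T ⊆ S → T.Nonempty → (1 - ε₁) * S.card ≤ T.card →
        ‖(T.card : ℝ)⁻¹ • ∑ i ∈ T, g i - (S.card : ℝ)⁻¹ • ∑ j ∈ S, g j‖ ≤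
          2 * σ₀ * Real.sqrt ε₁ :=
  stmt_8_general d ι S g σ₀ hσ₀ hconc
end

section
/- Let d ≥ 1, let S be a finite nonempty index set, let σ, κ, Υ ≥ 0 and b ≥ 1 be an integer. For each r ∈ S let n_r ≥ b be an integer and let u_{r,1}, …, u_{r,n_r} be vectors in ℝ^d with mean ū_r = (1/n_r)∑_{i=1}^{n_r} u_{r,i} satisfying (1/n_r) ∑_{i=1}^{n_r} ‖u_{r,i} − ū_r‖² ≤ σ². Let μ̄ ∈ ℝ^d satisfy ‖ū_r − μ̄‖ ≤ κ for every r ∈ S. For each r ∈ S let B_r ⊆ {1,…,n_r} be an arbitrary subset with |B_r| = b and set g_r = (1/b)∑_{i∈B_r} u_{r,i}, and let ĝ ∈ ℝ^d satisfy ‖ĝ − (1/|S|)∑_{r∈S} g_r‖ ≤ Υ. Then ‖μ̄ − ĝ‖ ≤ (max_{r∈S} n_r)·σ/b + κ + Υ. -/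
/-!
The mini-batch mean `g r` is an average of `b` of the points `u r i`, so its distance to `ubar r`
is at most `(1/b) ∑ᵢ ‖u r i - ubar r‖` over *all* `n r` points, which Cauchy–Schwarz bounds by
`n r · σ / b` without any use of the batch choice. Adding the dissimilarity `κ` puts every `g r`
in the closed ball of radius `(maxᵣ n r) · σ / b + κ` around `μbar`; the ball is convex, so it contains the
average of the `g r`, and the filtering error `Υ` is added by the triangle inequality.
-/

open Finset

section Averages

variable {ι E : Type*} [SeminormedAddCommGroup E]

theorem sum_norm_le_card_mul_of_mean_sq_norm_le {s : Finset ι} {x : ι → E} {σ : ℝ}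
    (hσ : 0 ≤ σ) (h : (#s : ℝ)⁻¹ * ∑ i ∈ s, ‖x i‖ ^ 2 ≤ σ ^ 2) :
    ∑ i ∈ s, ‖x i‖ ≤ #s * σ := by
  rcases s.eq_empty_or_nonempty with rfl | hs
  · simp
  have hcard : (0 : ℝ) < #s := by exact_mod_cast hs.card_pos
  have hsq : ∑ i ∈ s, ‖x i‖ ^ 2 ≤ #s * σ ^ 2 := by rwa [inv_mul_le_iff₀ hcard] at h
  rw [← pow_le_pow_iff_left₀ (sum_nonneg fun i _ => norm_nonneg _) (by positivity) two_ne_zero]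
  calc (∑ i ∈ s, ‖x i‖) ^ 2 ≤ #s * ∑ i ∈ s, ‖x i‖ ^ 2 := sq_sum_le_card_mul_sum_sq
    _ ≤ #s * (#s * σ ^ 2) := by gcongr
    _ = (#s * σ) ^ 2 := by ring

variable [NormedSpace ℝ E]

theorem norm_inv_card_smul_sum_sub_le_s9 {s t : Finset ι} (hs : s.Nonempty) (hst : s ⊆ t)
    (u : ι → E) (c : E) :
    ‖(#s : ℝ)⁻¹ • ∑ i ∈ s, u i - c‖ ≤ (#s : ℝ)⁻¹ * ∑ i ∈ t, ‖u i - c‖ := by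
  have hcard : (#s : ℝ) ≠ 0 := by exact_mod_cast hs.card_pos.ne'
  have hcenter : (#s : ℝ)⁻¹ • ∑ i ∈ s, u i - c = (#s : ℝ)⁻¹ • ∑ i ∈ s, (u i - c) := by
    rw [sum_sub_distrib, sum_const, smul_sub, ← Nat.cast_smul_eq_nsmul ℝ, smul_smul,
      inv_mul_cancel₀ hcard, one_smul]
  rw [hcenter, norm_smul, norm_inv, Real.norm_natCast]
  gcongr
  calc ‖∑ i ∈ s, (u i - c)‖ ≤ ∑ i ∈ s, ‖u i - c‖ := norm_sum_le _ _
    _ ≤ ∑ i ∈ t, ‖u i - c‖ := sum_le_sum_of_subset_of_nonneg hst fun _ _ _ => norm_nonneg _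

theorem norm_inv_card_smul_sum_sub_le_of_forall {s : Finset ι} (hs : s.Nonempty) {v : ι → E}
    {c : E} {R : ℝ} (h : ∀ i ∈ s, ‖v i - c‖ ≤ R) :
    ‖(#s : ℝ)⁻¹ • ∑ i ∈ s, v i - c‖ ≤ R := by
  have hcard : (#s : ℝ) ≠ 0 := by exact_mod_cast hs.card_pos.ne'
  have hmem := (convex_closedBall c R).sum_mem (t := s) (w := fun _ => (#s : ℝ)⁻¹) (z := v)
    (fun _ _ => by positivity) (by simp [hcard]) (fun i hi => by
      rw [Metric.mem_closedBall, dist_eq_norm]; exact h i hi)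
  rwa [Metric.mem_closedBall, dist_eq_norm, ← smul_sum] at hmem

end Averages

theorem stmt_9_general
    (d : ℕ)
    (ι : Type*) (S : Finset ι) (hS : S.Nonempty)
    (σ κ Υ : ℝ) (hσ : 0 ≤ σ)
    (b : ℕ) (hb : 1 ≤ b)
    (n : ι → ℕ)
    (u : (r : ι) → Fin (n r) → EuclideanSpace ℝ (Fin d))
    (ubar : ι → EuclideanSpace ℝ (Fin d))
    (hvar : ∀ r ∈ S, (n r : ℝ)⁻¹ * ∑ i, ‖u r i - ubar r‖ ^ 2 ≤ σ ^ 2)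
    (μbar : EuclideanSpace ℝ (Fin d)) (hdis : ∀ r ∈ S, ‖ubar r - μbar‖ ≤ κ)
    (B : (r : ι) → Finset (Fin (n r))) (hB : ∀ r ∈ S, (B r).card = b)
    (g : ι → EuclideanSpace ℝ (Fin d))
    (hg : ∀ r ∈ S, g r = (b : ℝ)⁻¹ • ∑ i ∈ B r, u r i)
    (ghat : EuclideanSpace ℝ (Fin d))
    (hghat : ‖ghat - (S.card : ℝ)⁻¹ • ∑ r ∈ S, g r‖ ≤ Υ) :
    ‖μbar - ghat‖ ≤ ((S.sup' hS n : ℕ) : ℝ) * σ / b + κ + Υ := by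
  have hbatch : ∀ r ∈ S, ‖g r - ubar r‖ ≤ n r * σ / b := by
    intro r hr
    have hBr := hB r hr
    have hsum : ∑ i, ‖u r i - ubar r‖ ≤ n r * σ := by
      simpa using sum_norm_le_card_mul_of_mean_sq_norm_le (s := univ)
        (x := fun i => u r i - ubar r) hσ (by simpa using hvar r hr)
    rw [hg r hr, ← hBr]
    calc _ ≤ ((B r).card : ℝ)⁻¹ * ∑ i, ‖u r i - ubar r‖ :=
          norm_inv_card_smul_sum_sub_le_s9 (card_pos.1 (by omega)) (subset_univ _) _ _
      _ ≤ ((B r).card : ℝ)⁻¹ * (n r * σ) := by gcongr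
      _ = _ := by ring
  have hworker : ∀ r ∈ S, ‖g r - μbar‖ ≤ (S.sup' hS n : ℕ) * σ / b + κ := fun r hr =>
    calc ‖g r - μbar‖ ≤ ‖g r - ubar r‖ + ‖ubar r - μbar‖ := norm_sub_le_norm_sub_add_norm_sub _ _ _
      _ ≤ n r * σ / b + κ := add_le_add (hbatch r hr) (hdis r hr)
      _ ≤ _ := by gcongr; exact_mod_cast le_sup' n hr
  have hmean := norm_inv_card_smul_sum_sub_le_of_forall hS hworker
  calc ‖μbar - ghat‖ ≤ ‖μbar - (S.card : ℝ)⁻¹ • ∑ r ∈ S, g r‖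
        + ‖(S.card : ℝ)⁻¹ • ∑ r ∈ S, g r - ghat‖ := norm_sub_le_norm_sub_add_norm_sub _ _ _
    _ ≤ _ := by rw [norm_sub_rev, norm_sub_rev _ ghat]; linarith

/-- **Deterministic (worst-case over mini-batch choices) deviation bound of the robust
gradient estimate from the true global gradient**:
`‖μ̄ − ĝ‖ ≤ (max_{r∈S} n_r)·σ/b + κ + Υ`. -/
theorem stmt_9
    (d : ℕ) (hd : 0 < d)
    (ι : Type*) (S : Finset ι) (hS : S.Nonempty)
    (σ κ Υ : ℝ) (hσ : 0 ≤ σ) (hκ : 0 ≤ κ) (hΥ : 0 ≤ Υ)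
    (b : ℕ) (hb : 1 ≤ b)
    (n : ι → ℕ) (hn : ∀ r ∈ S, b ≤ n r)
    (u : (r : ι) → Fin (n r) → EuclideanSpace ℝ (Fin d))
    (ubar : ι → EuclideanSpace ℝ (Fin d))
    (hubar : ∀ r ∈ S, ubar r = (n r : ℝ)⁻¹ • ∑ i, u r i)
    (hvar : ∀ r ∈ S, (n r : ℝ)⁻¹ * ∑ i, ‖u r i - ubar r‖ ^ 2 ≤ σ ^ 2)
    (μbar : EuclideanSpace ℝ (Fin d)) (hdis : ∀ r ∈ S, ‖ubar r - μbar‖ ≤ κ)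
    (B : (r : ι) → Finset (Fin (n r))) (hB : ∀ r ∈ S, (B r).card = b)
    (g : ι → EuclideanSpace ℝ (Fin d))
    (hg : ∀ r ∈ S, g r = (b : ℝ)⁻¹ • ∑ i ∈ B r, u r i)
    (ghat : EuclideanSpace ℝ (Fin d))
    (hghat : ‖ghat - (S.card : ℝ)⁻¹ • ∑ r ∈ S, g r‖ ≤ Υ) :
    ‖μbar - ghat‖ ≤ ((S.sup' hS n : ℕ) : ℝ) * σ / b + κ + Υ :=
  stmt_9_general d ι S hS σ κ Υ hσ b hb n u ubar hvar μbar hdis B hB g hg ghat hghat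
end
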